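/- If f = (A,B,C) is in G⁺ and γ(f) = (q₁,…,q_l), then Gauss's reduction operator applied to f equals f(q₁x+y, −x); that is, the number δ in the definition of R_G(f) equals the first partial quotient q₁ of γ(f). -/

import Mathlib

/-- A binary quadratic form `A x² + B x y + C y²` with integer coefficients. -/
structure QF where
  a : ℤ
  b : ℤ
  c : ℤ

/-- The discriminant `B² - 4AC` of a form. -/
def QF.disc (f : QF) : ℤ := f.b ^ 2 - 4 * f.a * f.c

/-- The action of a matrix `[[α, β], [γ, δ]]` on a form:
`f(x,y) ↦ f(αx + βy, γx + δy)`. -/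
def QF.transform (f : QF) (α β γ δ : ℤ) : QF :=
  ⟨f.a * α ^ 2 + f.b * α * γ + f.c * γ ^ 2,
   2 * f.a * α * β + f.b * (α * δ + β * γ) + 2 * f.c * γ * δ,
   f.a * β ^ 2 + f.b * β * δ + f.c * δ ^ 2⟩

/-- A form is indefinite if its discriminant is positive and not a perfect square. -/
def QF.IsIndefinite (f : QF) : Prop := 0 < f.disc ∧ ¬ IsSquare f.disc

/-- An indefinite form `(A,B,C)` is Z-reduced if `A,B,C > 0` and `B > A + C`. -/
def QF.IsZReduced (f : QF) : Prop :=
  f.IsIndefinite ∧ 0 < f.a ∧ 0 < f.b ∧ 0 < f.c ∧ f.a + f.c < f.b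

/-- An indefinite form `(A,B,C)` is G-reduced if `AC < 0` and `B > |A + C|`. -/
def QF.IsGReduced (f : QF) : Prop :=
  f.IsIndefinite ∧ f.a * f.c < 0 ∧ |f.a + f.c| < f.b

/-- G-reduced with `A > 0`. -/
def QF.IsGPlus (f : QF) : Prop := f.IsGReduced ∧ 0 < f.a

/-- G-reduced with `A < 0`. -/
def QF.IsGMinus (f : QF) : Prop := f.IsGReduced ∧ f.a < 0

/-- `(t, u)` is the fundamental solution of `|t² - Δ u²| = 4`:
a solution in positive integers with `u` minimal. -/
def IsFundSol (Δ t u : ℤ) : Prop :=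
  0 < t ∧ 0 < u ∧ |t ^ 2 - Δ * u ^ 2| = 4 ∧
    ∀ t' u' : ℤ, 0 < t' → 0 < u' → |t' ^ 2 - Δ * u' ^ 2| = 4 → u ≤ u'

/-- The continuant of a finite sequence of integers. -/
def cont : List ℤ → ℤ
  | [] => 1
  | [q] => q
  | q :: r :: t => q * cont (r :: t) + cont t

/-- `L` is the list of partial quotients of a regular continued fraction expansion of
the rational number `x`: all partial quotients are positive and the value of the
continued fraction, namely `cont L / cont L.tail`, equals `x`. -/
def IsCF (x : ℚ) (L : List ℤ) : Prop :=
  L ≠ [] ∧ (∀ q ∈ L, 0 < q) ∧ (cont L : ℚ) = x * cont L.tail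

/-- The bead sequence `β(f)` of a Z-reduced form `f = (A,B,C)` of discriminant `Δ`:
with `(t,u)` the fundamental solution of `|t² - Δu²| = 4` and `z = (t + Bu)/2`,
it is the continued fraction expansion of `z/(z - Au)` whose number of partial
quotients is even if `t² - Δu² = -4` and odd otherwise. -/
def QF.IsBeta (f : QF) (L : List ℤ) : Prop :=
  ∃ t u : ℤ, IsFundSol f.disc t u ∧
    IsCF ((((t + f.b * u : ℤ) : ℚ) / 2) / ((((t + f.b * u : ℤ) : ℚ) / 2) - ((f.a * u : ℤ) : ℚ))) L ∧
    (t ^ 2 - f.disc * u ^ 2 = -4 → Even L.length) ∧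
    (t ^ 2 - f.disc * u ^ 2 = 4 → Odd L.length)

/-- Dirichlet's map `γ(f)` for `f = (A,B,C)` in `G⁺` of discriminant `Δ`:
with `(t,u)` the fundamental solution of `|t² - Δu²| = 4` and `z = (t + Bu)/2`,
it is the continued fraction expansion of `z/(Au)` whose number of partial
quotients is odd if `t² - Δu² = -4` and even otherwise. -/
def QF.IsGamma (f : QF) (L : List ℤ) : Prop :=
  ∃ t u : ℤ, IsFundSol f.disc t u ∧
    IsCF ((((t + f.b * u : ℤ) : ℚ) / 2) / ((f.a * u : ℤ) : ℚ)) L ∧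
    (t ^ 2 - f.disc * u ^ 2 = -4 → Odd L.length) ∧
    (t ^ 2 - f.disc * u ^ 2 = 4 → Even L.length)

/-- The stars-and-bars map: `(q₁, …, q_l)` is sent to the binary string of length
`q₁ + ⋯ + q_l - 1` whose `j`-th character is `1` exactly at the partial sums
`q₁, q₁ + q₂, …, q₁ + ⋯ + q_{l-1}`. -/
def sb : List ℤ → List Bool
  | [] => []
  | [q] => List.replicate (q - 1).toNat false
  | q :: r :: t => List.replicate (q - 1).toNat false ++ true :: sb (r :: t)

/-- `σ(f) = sb(β(f))`. -/
def QF.IsSigma (f : QF) (s : List Bool) : Prop :=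
  ∃ L : List ℤ, f.IsBeta L ∧ s = sb L

/-- Zagier's reduction operator: `f ↦ f(nx + y, -x)` with `n = ⌈(B + √Δ)/(2A)⌉`. -/
noncomputable def RZ (f : QF) : QF :=
  f.transform ⌈((f.b : ℝ) + Real.sqrt (f.disc : ℝ)) / (2 * (f.a : ℝ))⌉ 1 (-1) 0

/-- The number `δ` in Gauss's reduction operator: `|δ| = ⌊(B + √Δ)/(2|A|)⌋` with
`δ` having the sign of `A`. -/
noncomputable def gaussDelta (f : QF) : ℤ :=
  f.a.sign * ⌊((f.b : ℝ) + Real.sqrt (f.disc : ℝ)) / (2 * |(f.a : ℝ)|)⌋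

/-- Gauss's reduction operator: `f ↦ f(δx + y, -x)`. -/
noncomputable def RG (f : QF) : QF := f.transform (gaussDelta f) 1 (-1) 0

/-- Add `1` to the last entry of a list. -/
def addLast : List ℤ → List ℤ
  | [] => []
  | [q] => [q + 1]
  | q :: r :: t => q :: addLast (r :: t)

/-- Subtract `1` from the last entry of a list. -/
def subLast : List ℤ → List ℤ
  | [] => []
  | [q] => [q - 1]
  | q :: r :: t => q :: subLast (r :: t)

/-- Subtract `1` from the first entry of a list. -/
def decHead : List ℤ → List ℤ
  | [] => []
  | q :: t => (q - 1) :: t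

/-- The operator `T_Z`: `(q₁,…,q_l) ↦ (q₁-1, q₂, …, q_{l-1}, q_l+1)` if `q₁ ≥ 2`;
`(q₂, q₁)` if `q₁ = 1` and `l = 2`; `(q₃, …, q_l, q₂, q₁)` if `q₁ = 1` and `l > 2`. -/
def TZ : List ℤ → List ℤ
  | [] => []
  | [q] => [q]
  | q :: r :: s => if q = 1 then s ++ [r, 1] else (q - 1) :: addLast (r :: s)

/-- The map `μ` from G-reduced forms to Z-reduced forms. -/
def mu (f : QF) : QF :=
  if 0 < f.a then ⟨f.a, 2 * f.a + f.b, f.a + f.b + f.c⟩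
  else ⟨f.a + f.b + f.c, f.b + 2 * f.c, f.c⟩

/-- The section `τ` of `β`: `τ((q₁,…,q_l)) = (A,B,C)` with `A = [q₁-1, q₂, …, q_l]`,
`C = [q₁, …, q_{l-1}, q_l - 1]`, `B = [q₁,…,q_l] + [q₁-1, q₂, …, q_{l-1}, q_l-1]`. -/
def tau (L : List ℤ) : QF :=
  ⟨cont (decHead L), cont L + cont (subLast (decHead L)), cont (subLast L)⟩

/-- Multiply all coefficients of a form by `u`. -/
def QF.smul (u : ℤ) (f : QF) : QF := ⟨u * f.a, u * f.b, u * f.c⟩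

/-- The reversal `(A,B,C)^R = (C,B,A)`. -/
def QF.rev (f : QF) : QF := ⟨f.c, f.b, f.a⟩

/-- The map `ρ((A,B,C)) = (-A, B, -C)`. -/
def rho (f : QF) : QF := ⟨-f.a, f.b, -f.c⟩

/-- A form is primitive if its coefficients have gcd 1. -/
def IsPrimitiveForm (f : QF) : Prop := Int.gcd f.a (Int.gcd f.b f.c) = 1

/-- `SL₂(ℤ)`-equivalence of forms. -/
def FormEquiv (f g : QF) : Prop :=
  ∃ α β γ δ : ℤ, α * δ - β * γ = 1 ∧ g = f.transform α β γ δ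

/-- A nonempty string is primitive if it differs from all of its nontrivial cyclic
shifts. -/
def PrimitiveList {α : Type*} (l : List α) : Prop :=
  l ≠ [] ∧ ∀ n, 0 < n → n < l.length → l.rotate n ≠ l

/-- The continuant `[q₂, …, q_{l-1}]` of the interior of a list, with the convention
that it is `0` for a list of length `≤ 1`. -/
def innerCont (L : List ℤ) : ℤ := if L.length ≤ 1 then 0 else cont (L.tail.dropLast)

/-- The section `ξ` of `γ`: `ξ((q₁,…,q_l)) = (A,B,C)` with `A = [q₂,…,q_l]`,
`B = [q₁,…,q_l] - [q₂,…,q_{l-1}]`, `C = -[q₁,…,q_{l-1}]`. -/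
def xiForm (L : List ℤ) : QF := ⟨cont L.tail, cont L - innerCont L, -(cont L.dropLast)⟩

/-- `p` is the minimal period of the purely periodic sequence `d`. -/
def IsMinPeriod {α : Type*} [Inhabited α] (d : ℕ → α) (p : List α) : Prop :=
  p ≠ [] ∧ (∀ n, d n = p.getD (n % p.length) default) ∧
    ∀ m, 0 < m → (∀ n, d (n + m) = d n) → p.length ≤ m

/-- `d` is the sequence of partial quotients of the Denjoy continued fraction of `x`
(`true` = quotient 1, `false` = quotient 0): `ξ₀ = x`, `qₙ = 0` if `ξ_{n-1} < 1`,
`qₙ = 1` if `ξ_{n-1} > 1`, and `ξₙ = 1/(ξ_{n-1} - qₙ)`. -/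
def IsDenjoySeq (x : ℝ) (d : ℕ → Bool) : Prop :=
  ∃ ξ : ℕ → ℝ, ξ 0 = x ∧
    ∀ n, ((ξ n < 1 ∧ d n = false) ∨ (1 < ξ n ∧ d n = true)) ∧
      ξ (n + 1) = 1 / (ξ n - if d n then 1 else 0)

/-- `a` is the sequence of partial quotients of the regular continued fraction of `x`. -/
def IsRegCFSeq (x : ℝ) (a : ℕ → ℤ) : Prop :=
  ∃ ξ : ℕ → ℝ, ξ 0 = x ∧ ∀ n, a n = ⌊ξ n⌋ ∧ ξ (n + 1) = 1 / (ξ n - (a n : ℝ))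

/-- Regular-to-Denjoy conversion: each partial quotient `q` becomes the string
`1 0 1 0 ⋯ 0 1` of `q` ones alternating with `q - 1` zeroes. -/
def regToDen (L : List ℤ) : List Bool :=
  (L.map fun q => true :: (List.replicate (q - 1).toNat [false, true]).flatten).flatten

/-- Replace each character `0` by the two characters `01`. -/
def expand01 (s : List Bool) : List Bool :=
  (s.map fun b => if b then [true] else [false, true]).flatten

/-- A quadratic irrational. -/
def IsQuadIrrational (x : ℝ) : Prop :=
  Irrational x ∧ ∃ a b c : ℤ, a ≠ 0 ∧ (a : ℝ) * x ^ 2 + (b : ℝ) * x + (c : ℝ) = 0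

/-! Writing `z = (t + Bu)/2`, the Pell relation becomes
`z² - Bzu + ACu² = ±1`, so the fraction `z/(Au)` is in lowest terms and `z`, `Au` are the
continuants `[q₁,…,q_l]`, `[q₂,…,q_l]`; the sign is `(-1)^l` by the parity convention of `γ`.
Factoring `z² - Bzu + ACu² = (z - uω)(z - uω')` over the roots `ω > 0 > ω'` of
`X² - BX + AC` shows that `uω` lies within `1` of `z`, on the side given by `(-1)^l`.
The continuant recursion `[q₁,…,q_l] = q₁[q₂,…,q_l] + [q₃,…,q_l]` then pins
`ω/A = (B + √Δ)/(2A)` between `q₁` and `q₁ + 1`. -/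

section Continuant

theorem cont_pos : ∀ L : List ℤ, (∀ q ∈ L, 0 < q) → 0 < cont L
  | [], _ => one_pos
  | [q], h => by simpa [cont] using h q (by simp)
  | q :: r :: t, h => by
    have h₁ := cont_pos (r :: t) fun x hx => h x (by simp_all)
    have h₂ := cont_pos t fun x hx => h x (by simp_all)
    have hq := h q (by simp)
    simp only [cont]
    positivity

theorem cont_tail_le : ∀ L : List ℤ, (∀ q ∈ L, 0 < q) → cont L.tail ≤ cont L
  | [], _ => le_rfl
  | [q], h => by have := h q (by simp); simp only [cont, List.tail_cons]; omega
  | q :: r :: t, h => by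
    have h₁ := cont_pos (r :: t) fun x hx => h x (by simp_all)
    have h₂ := cont_pos t fun x hx => h x (by simp_all)
    have hq := h q (by simp)
    simp only [cont, List.tail_cons]
    nlinarith

theorem isCoprime_cont_cont_tail : ∀ L : List ℤ, IsCoprime (cont L) (cont L.tail)
  | [] => isCoprime_one_left
  | [q] => isCoprime_one_right
  | q :: r :: t => by
    have h : cont (q :: r :: t) = cont t + cont (r :: t) * q := by simp only [cont]; ring
    rw [List.tail_cons, h]
    exact (isCoprime_cont_cont_tail (r :: t)).symm.add_mul_left_left q

theorem cont_mem_Ioc_of_even : ∀ L : List ℤ, (∀ q ∈ L, 0 < q) → Even L.length →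
    L.headI * cont L.tail < cont L ∧ cont L ≤ (L.headI + 1) * cont L.tail
  | [], _, _ => by simp [cont]
  | [_], _, hl => by simp at hl
  | q :: r :: t, h, _ => by
    have h₁ := cont_pos t fun x hx => h x (by simp_all)
    have h₂ := cont_tail_le (r :: t) fun x hx => h x (by simp_all)
    simp only [cont, List.headI, List.tail_cons] at h₂ ⊢
    constructor <;> linarith

theorem cont_mem_Ico_of_odd : ∀ L : List ℤ, (∀ q ∈ L, 0 < q) → Odd L.length →
    L.headI * cont L.tail ≤ cont L ∧ cont L < (L.headI + 1) * cont L.tail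
  | [], _, hl => by simp at hl
  | [_], _, _ => by simp [cont]
  | [_, _], _, hl => by simp [Nat.odd_iff] at hl
  | q :: r :: s :: v, h, _ => by
    have h₁ := cont_pos (s :: v) fun x hx => h x (by simp_all)
    have h₂ := cont_pos v fun x hx => h x (by simp_all)
    have hr := h r (by simp)
    simp only [cont, List.headI, List.tail_cons]
    constructor <;> nlinarith

theorem floor_div_cont_tail_eq_headI {L : List ℤ} (hL : ∀ q ∈ L, 0 < q) {w : ℝ}
    (hw : (-1) ^ L.length * ((cont L : ℝ) - w) ∈ Set.Ioo 0 1) :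
    ⌊w / cont L.tail⌋ = L.headI := by
  obtain ⟨h₀, h₁⟩ := hw
  have hN : (0 : ℝ) < cont L.tail :=
    mod_cast cont_pos L.tail fun q hq => hL q (L.mem_of_mem_tail hq)
  rw [Int.floor_eq_iff, le_div_iff₀ hN, div_lt_iff₀ hN]
  rcases Nat.even_or_odd L.length with hl | hl
  · obtain ⟨hlo, hhi⟩ := cont_mem_Ioc_of_even L hL hl
    have hlo' : ((L.headI * cont L.tail + 1 : ℤ) : ℝ) ≤ cont L := mod_cast hlo
    have hhi' : ((cont L : ℤ) : ℝ) ≤ ((L.headI + 1) * cont L.tail : ℤ) := mod_cast hhi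
    rw [hl.neg_one_pow, one_mul] at h₀ h₁
    push_cast at hlo' hhi'
    constructor <;> linarith
  · obtain ⟨hlo, hhi⟩ := cont_mem_Ico_of_odd L hL hl
    have hlo' : ((L.headI * cont L.tail : ℤ) : ℝ) ≤ cont L := mod_cast hlo
    have hhi' : ((cont L + 1 : ℤ) : ℝ) ≤ ((L.headI + 1) * cont L.tail : ℤ) := mod_cast hhi
    rw [hl.neg_one_pow] at h₀ h₁
    push_cast at hlo' hhi'
    constructor <;> linarith

theorem eq_cont_of_isCF {L : List ℤ} {z N : ℤ} (hL : IsCF (z / N) L) (hN : 0 < N)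
    (hzN : IsCoprime z N) : z = cont L ∧ N = cont L.tail := by
  obtain ⟨-, hpos, hval⟩ := hL
  have hT := cont_pos L.tail fun q hq => hpos q (L.mem_of_mem_tail hq)
  refine Rat.div_int_inj hN hT (Int.isCoprime_iff_gcd_eq_one.mp hzN)
    (Int.isCoprime_iff_gcd_eq_one.mp (isCoprime_cont_cont_tail L)) ?_
  rw [hval, mul_div_cancel_right₀ _ (by exact_mod_cast hT.ne')]

end Continuant

namespace QF

theorem even_add_b_mul {f : QF} {t u : ℤ} (h : 4 ∣ t ^ 2 - f.disc * u ^ 2) :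
    Even (t + f.b * u) := by
  have hprod : Even ((t + f.b * u) * (t - f.b * u)) := by
    have : (t + f.b * u) * (t - f.b * u) =
        (t ^ 2 - f.disc * u ^ 2) - 4 * (f.a * f.c * u ^ 2) := by
      rw [disc]; ring
    rw [this]
    exact (even_iff_two_dvd.mpr ((dvd_trans (by norm_num) h))).sub
      (even_iff_two_dvd.mpr (dvd_mul_of_dvd_left (by norm_num) _))
  have hsub : t - f.b * u = t + f.b * u - 2 * (f.b * u) := by ring
  rcases Int.even_mul.mp hprod with h' | h'
  · exact h'
  · rw [hsub] at h'
    simpa using (Int.even_sub.mp h')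

theorem gaussDelta_of_pos {f : QF} (hA : 0 < f.a) :
    gaussDelta f = ⌊((f.b : ℝ) + √(f.disc : ℝ)) / (2 * f.a)⌋ := by
  rw [gaussDelta, Int.sign_eq_one_of_pos hA, one_mul, abs_of_pos (by exact_mod_cast hA)]

/-- With `ω > 0 > ω'` the roots of `X² - BX + AC`, the hypothesis reads
`(z - uω)(z - uω') = e`, and `z - uω' > 1`. -/
theorem mul_sub_mul_root_mem_Ioo {f : QF} (hAC : f.a * f.c < 0) {z u e : ℤ} (hz : 0 < z)
    (hu : 0 < u) (he : e * e = 1) (hnorm : z ^ 2 - f.b * z * u + f.a * f.c * u ^ 2 = e) :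
    e * (z - u * (f.b + √(f.disc : ℝ)) / 2) ∈ Set.Ioo 0 1 := by
  have hΔ : ((f.disc : ℤ) : ℝ) = (f.b : ℝ) ^ 2 - 4 * f.a * f.c := by
    rw [disc]; push_cast; ring
  have hACr : (f.a : ℝ) * f.c < 0 := mod_cast hAC
  have hs : √(f.disc : ℝ) ^ 2 = f.disc := Real.sq_sqrt (by rw [hΔ]; nlinarith)
  have hbs : (f.b : ℝ) < √(f.disc : ℝ) := Real.lt_sqrt_of_sq_lt (by rw [hΔ]; linarith)
  have hzr : (1 : ℝ) ≤ z := mod_cast hz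
  have hur : (0 : ℝ) < u := mod_cast hu
  have hfactor : (e : ℝ) * (z - u * (f.b + √(f.disc : ℝ)) / 2) *
      (z - u * (f.b - √(f.disc : ℝ)) / 2) = 1 := by
    have hnorm' : (z : ℝ) ^ 2 - f.b * z * u + f.a * f.c * u ^ 2 = e := mod_cast hnorm
    have he' : (e : ℝ) * e = 1 := mod_cast he
    linear_combination (e : ℝ) * hnorm' + he' - (e : ℝ) * u ^ 2 / 4 * (hs + hΔ)
  have hconj : 1 < (z : ℝ) - u * (f.b - √(f.disc : ℝ)) / 2 := by nlinarith
  constructor <;> nlinarith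

end QF

/-- **Lemma (first coefficient).** If `f ∈ G⁺` and `γ(f) = (q₁,…,q_l)`, then the
number `δ` in the definition of `R_G` equals `q₁`, so
`R_G(f) = f(q₁ x + y, -x)`. -/
theorem stmt14 (f : QF) (hf : f.IsGPlus) (L : List ℤ) (hL : f.IsGamma L) :
    gaussDelta f = L.headI ∧ RG f = f.transform L.headI 1 (-1) 0 := by
  obtain ⟨⟨-, hAC, -⟩, hA⟩ := hf
  obtain ⟨t, u, ⟨-, hu, habs, -⟩, hcf, hodd, heven⟩ := hL
  have hpell : t ^ 2 - f.disc * u ^ 2 = 4 * (-1) ^ L.length := by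
    rcases (abs_eq (by norm_num)).mp habs with h | h
    · rw [h, (heven h).neg_one_pow]; norm_num
    · rw [h, (hodd h).neg_one_pow]; norm_num
  obtain ⟨z, hz⟩ := QF.even_add_b_mul ⟨_, hpell⟩
  have hnorm : z ^ 2 - f.b * z * u + f.a * f.c * u ^ 2 = (-1) ^ L.length := by
    have : 4 * (z ^ 2 - f.b * z * u + f.a * f.c * u ^ 2) = 4 * (-1) ^ L.length := by
      rw [← hpell, QF.disc]; linear_combination (f.b * u - 2 * z - t) * hz
    omega
  have hsign : ((-1) ^ L.length : ℤ) * (-1) ^ L.length = 1 := by rw [← mul_pow]; norm_num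
  have hzAu : IsCoprime z (f.a * u) :=
    ⟨(-1) ^ L.length * (z - f.b * u), (-1) ^ L.length * (f.c * u), by
      linear_combination (-1) ^ L.length * hnorm + hsign⟩
  rw [hz, show (((z + z : ℤ) : ℚ) / 2) = z by push_cast; ring] at hcf
  obtain ⟨rfl, hN⟩ := eq_cont_of_isCF hcf (mul_pos hA hu) hzAu
  have hpos := hcf.2.1
  have hδ : gaussDelta f = L.headI := by
    have hw := QF.mul_sub_mul_root_mem_Ioo hAC (cont_pos L hpos) hu hsign hnorm
    push_cast at hw
    rw [QF.gaussDelta_of_pos hA, ← floor_div_cont_tail_eq_headI hpos hw, ← hN]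
    have hu' : (u : ℝ) ≠ 0 := mod_cast hu.ne'
    push_cast
    field_simp
  exact ⟨hδ, by rw [RG, hδ]⟩
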